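/- arXiv:1711.09022 — 5 statements merged into one kernel-verified Lean document; each statement's English description precedes it below -/
import Mathlib

section
/- Let B = {X ∈ ℝ³ : ‖X‖ < r} (r > 0) carry the quadratic response W(X,F) = f(‖X‖²) • (F Fᵀ − 1) for a function f : ℝ → ℝ. Then for X, Y ∈ B there exists a material isomorphism from X to Y if and only if f(‖X‖²) = f(‖Y‖²). -/
/-! Testing `G = 1` shows that a material isomorphism `F` from `X` to `Y` satisfies
`f(‖X‖²) (F Fᵀ - 1) = 0`, and then `W(X, G F) = W(X, G)` for every `G`. So `F` is a material
isomorphism iff moreover `f(‖X‖²) (G Gᵀ - 1) = f(‖Y‖²) (G Gᵀ - 1)` for all `G`, and a single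
`G` with `G Gᵀ ≠ 1` forces `f(‖X‖²) = f(‖Y‖²)`; conversely `F = 1` then works. -/

open Matrix

/-- `F ∈ GL(3,ℝ)` is a material isomorphism from `X` to `Y` for the
mechanical response `W`: `W (X, G * F) = W (Y, G)` for every `G ∈ GL(3,ℝ)`. -/
def IsMatIso {V : Type*} (W : EuclideanSpace ℝ (Fin 3) → GL (Fin 3) ℝ → V)
    (X Y : EuclideanSpace ℝ (Fin 3)) (F : GL (Fin 3) ℝ) : Prop :=
  ∀ G : GL (Fin 3) ℝ, W X (G * F) = W Y G

/-- The quadratic mechanical response `W(X,F) = f(‖X‖²) • (F Fᵀ − 1)`. -/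
noncomputable def Wq (f : ℝ → ℝ) (X : EuclideanSpace ℝ (Fin 3)) (F : GL (Fin 3) ℝ) :
    Matrix (Fin 3) (Fin 3) ℝ :=
  f (‖X‖ ^ 2) • ((F : Matrix (Fin 3) (Fin 3) ℝ) * (F : Matrix (Fin 3) (Fin 3) ℝ)ᵀ - 1)

theorem Matrix.smul_mul_mul_transpose_sub_one {R n : Type*} [CommRing R] [Fintype n]
    [DecidableEq n] {a : R} {M : Matrix n n R} (hM : a • (M * Mᵀ - 1) = 0)
    (G : Matrix n n R) : a • (G * M * (G * M)ᵀ - 1) = a • (G * Gᵀ - 1) := by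
  have hM' : a • (M * Mᵀ) = a • 1 := by rwa [smul_sub, sub_eq_zero] at hM
  calc a • (G * M * (G * M)ᵀ - 1) = G * (a • (M * Mᵀ)) * Gᵀ - a • 1 := by
        rw [transpose_mul, smul_sub, Matrix.mul_smul, Matrix.smul_mul, Matrix.mul_assoc,
          Matrix.mul_assoc, Matrix.mul_assoc]
    _ = a • (G * Gᵀ - 1) := by
        rw [hM', Matrix.mul_smul, Matrix.smul_mul, Matrix.mul_one, smul_sub]

theorem Matrix.GeneralLinearGroup.exists_mul_transpose_ne_one {n : Type*} [Fintype n]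
    [DecidableEq n] [Nonempty n] : ∃ G : GL n ℝ, (G : Matrix n n ℝ) * (G : Matrix n n ℝ)ᵀ ≠ 1 := by
  refine ⟨GeneralLinearGroup.scalar n (Units.mk0 2 two_ne_zero), fun h => ?_⟩
  have := congrFun (congrFun h (Classical.arbitrary n)) (Classical.arbitrary n)
  norm_num [GeneralLinearGroup.coe_scalar] at this

theorem Wq_one (f : ℝ → ℝ) (X : EuclideanSpace ℝ (Fin 3)) : Wq f X 1 = 0 := by
  simp [Wq]

theorem Wq_mul_of_Wq_eq_zero {f : ℝ → ℝ} {X : EuclideanSpace ℝ (Fin 3)} {F : GL (Fin 3) ℝ}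
    (hF : Wq f X F = 0) (G : GL (Fin 3) ℝ) : Wq f X (G * F) = Wq f X G := by
  simpa [Wq] using smul_mul_mul_transpose_sub_one hF G

theorem isMatIso_Wq_iff {f : ℝ → ℝ} {X Y : EuclideanSpace ℝ (Fin 3)} {F : GL (Fin 3) ℝ} :
    IsMatIso (Wq f) X Y F ↔ Wq f X F = 0 ∧ f (‖X‖ ^ 2) = f (‖Y‖ ^ 2) := by
  constructor
  · intro h
    have hF : Wq f X F = 0 := by simpa [Wq_one] using h 1
    obtain ⟨G, hG⟩ := GeneralLinearGroup.exists_mul_transpose_ne_one (n := Fin 3)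
    exact ⟨hF, smul_left_injective ℝ (sub_ne_zero.mpr hG)
      ((Wq_mul_of_Wq_eq_zero hF G).symm.trans (h G))⟩
  · rintro ⟨hF, hXY⟩ G
    rw [Wq_mul_of_Wq_eq_zero hF, Wq, Wq, hXY]

theorem matIso_quadratic_iff_general (f : ℝ → ℝ)
    (X Y : EuclideanSpace ℝ (Fin 3)) :
    (∃ F : GL (Fin 3) ℝ, IsMatIso (Wq f) X Y F) ↔ f (‖X‖ ^ 2) = f (‖Y‖ ^ 2) :=
  ⟨fun ⟨_, hF⟩ => (isMatIso_Wq_iff.mp hF).2, fun h => ⟨1, isMatIso_Wq_iff.mpr ⟨Wq_one f X, h⟩⟩⟩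

/-- For the quadratic response on the ball of radius `r`, there is a material
isomorphism from `X` to `Y` if and only if `f(‖X‖²) = f(‖Y‖²)`. -/
theorem matIso_quadratic_iff (r : ℝ) (hr : 0 < r) (f : ℝ → ℝ)
    (X Y : EuclideanSpace ℝ (Fin 3)) (hX : ‖X‖ < r) (hY : ‖Y‖ < r) :
    (∃ F : GL (Fin 3) ℝ, IsMatIso (Wq f) X Y F) ↔ f (‖X‖ ^ 2) = f (‖Y‖ ^ 2) :=
  matIso_quadratic_iff_general f X Y
end

section
/- Let B = {X ∈ ℝ³ : ‖X‖ < r} (r > 0) carry the quadratic response W(X,F) = f(‖X‖²) • (F Fᵀ − 1) for a function f : ℝ → ℝ. If X, Y ∈ B satisfy f(‖X‖²) = f(‖Y‖²) ≠ 0, then the set of material isomorphisms from X to Y equals exactly the set of orthogonal elements of GL(3,ℝ), i.e. {F ∈ GL(3,ℝ) : F Fᵀ = 1} = O(3). -/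
open Matrix

/-!
Taking `G = 1` shows that a material isomorphism `F` satisfies `f(‖X‖²) • (F Fᵀ − 1) = 0`,
hence `F Fᵀ = 1`. Conversely, `(G F)(G F)ᵀ = G (F Fᵀ) Gᵀ = G Gᵀ` for orthogonal `F`, and the
responses at `X` and `Y` coincide because they depend on the point only through `f(‖X‖²)`.
-/

theorem Matrix.mul_mul_transpose_eq_of_mul_transpose_eq_one {n R : Type*} [Fintype n] [DecidableEq n]
    [CommSemiring R] (A B : Matrix n n R) (hA : A * Aᵀ = 1) :
    B * A * (B * A)ᵀ = B * Bᵀ := by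
  rw [transpose_mul, Matrix.mul_assoc, ← Matrix.mul_assoc A, hA, Matrix.one_mul]

theorem Wq_eq_of_eq {f : ℝ → ℝ} {X Y : EuclideanSpace ℝ (Fin 3)}
    (hXY : f (‖X‖ ^ 2) = f (‖Y‖ ^ 2)) : Wq f X = Wq f Y := by
  funext F
  rw [Wq, Wq, hXY]

theorem Wq_mul_of_mul_transpose_eq_one (f : ℝ → ℝ) (X : EuclideanSpace ℝ (Fin 3))
    {F : GL (Fin 3) ℝ} (hF : (F : Matrix (Fin 3) (Fin 3) ℝ) * (F : Matrix (Fin 3) (Fin 3) ℝ)ᵀ = 1)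
    (G : GL (Fin 3) ℝ) : Wq f X (G * F) = Wq f X G := by
  rw [Wq, Wq, Units.val_mul, mul_mul_transpose_eq_of_mul_transpose_eq_one _ _ hF]

theorem mul_transpose_eq_one_of_isMatIso {f : ℝ → ℝ} {X Y : EuclideanSpace ℝ (Fin 3)}
    (hne : f (‖X‖ ^ 2) ≠ 0) {F : GL (Fin 3) ℝ} (hF : IsMatIso (Wq f) X Y F) :
    (F : Matrix (Fin 3) (Fin 3) ℝ) * (F : Matrix (Fin 3) (Fin 3) ℝ)ᵀ = 1 := by
  have h : Wq f X F = 0 := by simpa [Wq_one] using hF 1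
  exact sub_eq_zero.mp ((smul_eq_zero.mp h).resolve_left hne)

theorem matIso_quadratic_orthogonal_general (f : ℝ → ℝ)
    (X Y : EuclideanSpace ℝ (Fin 3))
    (hXY : f (‖X‖ ^ 2) = f (‖Y‖ ^ 2)) (hne : f (‖X‖ ^ 2) ≠ 0) :
    {F : GL (Fin 3) ℝ | IsMatIso (Wq f) X Y F} =
      {F : GL (Fin 3) ℝ |
        (F : Matrix (Fin 3) (Fin 3) ℝ) * (F : Matrix (Fin 3) (Fin 3) ℝ)ᵀ = 1} := by
  ext F
  refine ⟨mul_transpose_eq_one_of_isMatIso hne, fun hF G => ?_⟩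
  rw [Wq_mul_of_mul_transpose_eq_one f X hF, Wq_eq_of_eq hXY]

/-- For the quadratic response, if `f(‖X‖²) = f(‖Y‖²) ≠ 0`, then the set of
material isomorphisms from `X` to `Y` is exactly the orthogonal group `O(3)`. -/
theorem matIso_quadratic_orthogonal (r : ℝ) (hr : 0 < r) (f : ℝ → ℝ)
    (X Y : EuclideanSpace ℝ (Fin 3)) (hX : ‖X‖ < r) (hY : ‖Y‖ < r)
    (hXY : f (‖X‖ ^ 2) = f (‖Y‖ ^ 2)) (hne : f (‖X‖ ^ 2) ≠ 0) :
    {F : GL (Fin 3) ℝ | IsMatIso (Wq f) X Y F} =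
      {F : GL (Fin 3) ℝ |
        (F : Matrix (Fin 3) (Fin 3) ℝ) * (F : Matrix (Fin 3) (Fin 3) ℝ)ᵀ = 1} :=
  matIso_quadratic_orthogonal_general f X Y hXY hne
end

section
/- Let B = {X ∈ ℝ³ : ‖X‖ < r} (r > 0) carry the quadratic response W(X,F) = f(‖X‖²) • (F Fᵀ − 1), and assume f : ℝ → ℝ is strictly monotone on [0,∞). Then two points X, Y ∈ B are materially isomorphic if and only if ‖X‖ = ‖Y‖. -/
/-! Testing a material isomorphism `F` at `G = 1` gives `f(‖X‖²) (F Fᵀ - 1) = 0`; testing it at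
`G = 2 • 1` and subtracting four times the first identity leaves `3 f(‖X‖²) = 3 f(‖Y‖²)`, so
injectivity of `f` on `[0, ∞)` forces `‖X‖ = ‖Y‖`. Conversely `1` is a material isomorphism between
points of equal norm. -/

open Matrix

theorem eq_of_forall_smul_mul_mul_transpose_sub_one {n K : Type*} [Fintype n] [DecidableEq n]
    [Nonempty n] [Field K] [CharZero K] {a b : K} {F : GL n K}
    (h : ∀ G : GL n K, a • ((↑(G * F) : Matrix n n K) * (↑(G * F))ᵀ - 1) =
      b • ((G : Matrix n n K) * (G : Matrix n n K)ᵀ - 1)) :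
    a = b := by
  set M : Matrix n n K := F * (F : Matrix n n K)ᵀ
  have hG_one : a • M = a • 1 := by
    simpa [smul_sub, sub_eq_zero] using h 1
  have hG_two : a • ((4 : K) • M - 1) = b • ((4 : K) • 1 - 1) := by
    have e : Matrix.scalar n (2 : K) = (2 : K) • 1 := (smul_one_eq_diagonal 2).symm
    simpa [M, e, Matrix.mul_assoc, smul_smul, show (2 : K) * 2 = 4 by norm_num]
      using h (GeneralLinearGroup.scalar n (Units.mk0 (2 : K) two_ne_zero))
  have hcoeff : (3 * a) • (1 : Matrix n n K) = (3 * b) • 1 := by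
    calc (3 * a) • (1 : Matrix n n K) = a • ((4 : K) • M - 1) := by
          rw [smul_sub, smul_comm a (4 : K), hG_one]; module
      _ = (3 * b) • 1 := by rw [hG_two]; module
  exact mul_left_cancel₀ three_ne_zero (smul_left_injective K one_ne_zero hcoeff)

theorem isMatIso_Wq_one {f : ℝ → ℝ} {X Y : EuclideanSpace ℝ (Fin 3)} (h : ‖X‖ = ‖Y‖) :
    IsMatIso (Wq f) X Y 1 := fun G => by
  simp [Wq, h]

theorem IsMatIso.Wq_coeff_eq {f : ℝ → ℝ} {X Y : EuclideanSpace ℝ (Fin 3)} {F : GL (Fin 3) ℝ}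
    (h : IsMatIso (Wq f) X Y F) : f (‖X‖ ^ 2) = f (‖Y‖ ^ 2) :=
  eq_of_forall_smul_mul_mul_transpose_sub_one h

theorem matIso_quadratic_strictMono_general (f : ℝ → ℝ)
    (hf : StrictMonoOn f (Set.Ici 0) ∨ StrictAntiOn f (Set.Ici 0))
    (X Y : EuclideanSpace ℝ (Fin 3)) :
    (∃ F : GL (Fin 3) ℝ, IsMatIso (Wq f) X Y F) ↔ ‖X‖ = ‖Y‖ := by
  refine ⟨fun ⟨F, hF⟩ => ?_, fun h => ⟨1, isMatIso_Wq_one h⟩⟩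
  have hinj : Set.InjOn f (Set.Ici 0) := hf.elim StrictMonoOn.injOn StrictAntiOn.injOn
  have hsq : ‖X‖ ^ 2 = ‖Y‖ ^ 2 :=
    hinj (Set.mem_Ici.2 (sq_nonneg _)) (Set.mem_Ici.2 (sq_nonneg _)) hF.Wq_coeff_eq
  exact (pow_left_inj₀ (norm_nonneg X) (norm_nonneg Y) two_ne_zero).1 hsq

/-- If `f` is strictly monotone on `[0,∞)`, then two points of the ball are
materially isomorphic for the quadratic response iff they have the same norm. -/
theorem matIso_quadratic_strictMono (r : ℝ) (hr : 0 < r) (f : ℝ → ℝ)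
    (hf : StrictMonoOn f (Set.Ici 0) ∨ StrictAntiOn f (Set.Ici 0))
    (X Y : EuclideanSpace ℝ (Fin 3)) (hX : ‖X‖ < r) (hY : ‖Y‖ < r) :
    (∃ F : GL (Fin 3) ℝ, IsMatIso (Wq f) X Y F) ↔ ‖X‖ = ‖Y‖ :=
  matIso_quadratic_strictMono_general f hf X Y
end

section
/- Let 0 < s < r, let B = {X ∈ ℝ³ : ‖X‖ < r} carry the quadratic response W(X,F) = f(‖X‖²) • (F Fᵀ − 1), and assume f : ℝ → ℝ satisfies: f(t) = 1 for all t ∈ [0, s²], f is strictly monotone on [s², ∞), and f(t) ≠ 0 for all t ∈ [0, ∞). Then two points X, Y ∈ B are materially isomorphic if and only if ‖X‖ = ‖Y‖ or (‖X‖ ≤ s and ‖Y‖ ≤ s). -/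
/-!
Testing a material isomorphism `F` from `X` to `Y` against `G = 1` forces `F Fᵀ = 1`, since
`f(‖X‖²) ≠ 0`; then `(G F)(G F)ᵀ = G Gᵀ`, and any `G` with `G Gᵀ ≠ 1` gives
`f(‖X‖²) = f(‖Y‖²)`. Conversely `F = 1` works whenever these values agree. So `X` and `Y` are
materially isomorphic iff `f(‖X‖²) = f(‖Y‖²)`, and as `f` is constant on `[0, s²]` and injective on
`[s², ∞)`, this says `max ‖X‖² s² = max ‖Y‖² s²`.
-/

open Matrix

open Set

section GramDeviation

variable {n : Type*} [Fintype n] [DecidableEq n]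

theorem exists_gl_mul_transpose_ne_one [Nonempty n] :
    ∃ G : GL n ℝ, (G : Matrix n n ℝ) * (G : Matrix n n ℝ)ᵀ ≠ 1 := by
  refine ⟨GeneralLinearGroup.scalar n (Units.mk0 2 two_ne_zero), fun h => ?_⟩
  have := congrFun₂ h (Classical.arbitrary n) (Classical.arbitrary n)
  norm_num [diagonal_transpose, diagonal_mul_diagonal] at this

theorem mul_mul_transpose_of_mul_transpose_eq_one {F : Matrix n n ℝ} (hF : F * Fᵀ = 1)
    (G : Matrix n n ℝ) : G * F * (G * F)ᵀ = G * Gᵀ := by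
  rw [transpose_mul, Matrix.mul_assoc, ← Matrix.mul_assoc F, hF, Matrix.one_mul]

theorem exists_forall_smul_mul_transpose_sub_one_iff [Nonempty n] {α β : ℝ} (hα : α ≠ 0) :
    (∃ F : GL n ℝ, ∀ G : GL n ℝ,
        α • (((G * F : GL n ℝ) : Matrix n n ℝ) * ((G * F : GL n ℝ) : Matrix n n ℝ)ᵀ - 1) =
          β • ((G : Matrix n n ℝ) * (G : Matrix n n ℝ)ᵀ - 1)) ↔ α = β := by
  constructor
  · rintro ⟨F, hF⟩
    have hFF : (F : Matrix n n ℝ) * (F : Matrix n n ℝ)ᵀ = 1 := by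
      simpa [hα, sub_eq_zero] using hF 1
    obtain ⟨G, hG⟩ := exists_gl_mul_transpose_ne_one (n := n)
    have hFG := hF G
    rw [Units.val_mul, mul_mul_transpose_of_mul_transpose_eq_one hFF] at hFG
    exact smul_left_injective ℝ (sub_ne_zero.mpr hG) hFG
  · rintro rfl
    exact ⟨1, fun G => by rw [mul_one]⟩

end GramDeviation

theorem exists_isMatIso_wq_iff {f : ℝ → ℝ} {X Y : EuclideanSpace ℝ (Fin 3)}
    (hX : f (‖X‖ ^ 2) ≠ 0) :
    (∃ F : GL (Fin 3) ℝ, IsMatIso (Wq f) X Y F) ↔ f (‖X‖ ^ 2) = f (‖Y‖ ^ 2) :=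
  exists_forall_smul_mul_transpose_sub_one_iff hX

section ConstantThenInjective

variable {α β : Type*} [LinearOrder α] {f : α → β} {a : β} {b c t u : α}

theorem max_eq_max_iff : max t c = max u c ↔ t = u ∨ (t ≤ c ∧ u ≤ c) := by
  rcases le_total t c with ht | ht <;> rcases le_total u c with hu | hu <;>
    simp only [max_eq_left, max_eq_right, ht, hu] <;> grind

theorem apply_eq_apply_max_of_eqOn_Icc (hconst : ∀ x ∈ Icc b c, f x = a) (hbc : b ≤ c)
    (ht : b ≤ t) : f t = f (max t c) := by
  rcases le_total t c with htc | hct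
  · rw [max_eq_right htc, hconst t ⟨ht, htc⟩, hconst c ⟨hbc, le_rfl⟩]
  · rw [max_eq_left hct]

theorem apply_eq_apply_iff_of_eqOn_Icc_of_injOn (hconst : ∀ x ∈ Icc b c, f x = a)
    (hinj : InjOn f (Ici c)) (hbc : b ≤ c) (ht : b ≤ t) (hu : b ≤ u) :
    f t = f u ↔ t = u ∨ (t ≤ c ∧ u ≤ c) := by
  rw [apply_eq_apply_max_of_eqOn_Icc hconst hbc ht, apply_eq_apply_max_of_eqOn_Icc hconst hbc hu,
    hinj.eq_iff (le_max_right t c) (le_max_right u c), max_eq_max_iff]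

end ConstantThenInjective

theorem matIso_quadratic_locallyConstant_general (s : ℝ) (hs : 0 < s)
    (f : ℝ → ℝ)
    (hf1 : ∀ t ∈ Set.Icc (0 : ℝ) (s ^ 2), f t = 1)
    (hf : StrictMonoOn f (Set.Ici (s ^ 2)) ∨ StrictAntiOn f (Set.Ici (s ^ 2)))
    (hf0 : ∀ t ∈ Set.Ici (0 : ℝ), f t ≠ 0)
    (X Y : EuclideanSpace ℝ (Fin 3)) :
    (∃ F : GL (Fin 3) ℝ, IsMatIso (Wq f) X Y F) ↔
      ‖X‖ = ‖Y‖ ∨ (‖X‖ ≤ s ∧ ‖Y‖ ≤ s) := by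
  have hinj : InjOn f (Ici (s ^ 2)) := hf.elim StrictMonoOn.injOn StrictAntiOn.injOn
  rw [exists_isMatIso_wq_iff (hf0 _ (sq_nonneg (‖X‖))),
    apply_eq_apply_iff_of_eqOn_Icc_of_injOn hf1 hinj (sq_nonneg s) (sq_nonneg _) (sq_nonneg _),
    sq_eq_sq₀ (norm_nonneg X) (norm_nonneg Y),
    pow_le_pow_iff_left₀ (norm_nonneg X) hs.le two_ne_zero,
    pow_le_pow_iff_left₀ (norm_nonneg Y) hs.le two_ne_zero]

/-- If `f ≡ 1` on `[0,s²]`, is strictly monotone on `[s²,∞)` and nowhere zero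
on `[0,∞)`, then `X, Y` in the ball of radius `r` are materially isomorphic
iff `‖X‖ = ‖Y‖` or both `‖X‖ ≤ s` and `‖Y‖ ≤ s`. -/
theorem matIso_quadratic_locallyConstant (s r : ℝ) (hs : 0 < s) (hsr : s < r)
    (f : ℝ → ℝ)
    (hf1 : ∀ t ∈ Set.Icc (0 : ℝ) (s ^ 2), f t = 1)
    (hf : StrictMonoOn f (Set.Ici (s ^ 2)) ∨ StrictAntiOn f (Set.Ici (s ^ 2)))
    (hf0 : ∀ t ∈ Set.Ici (0 : ℝ), f t ≠ 0)
    (X Y : EuclideanSpace ℝ (Fin 3)) (hX : ‖X‖ < r) (hY : ‖Y‖ < r) :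
    (∃ F : GL (Fin 3) ℝ, IsMatIso (Wq f) X Y F) ↔
      ‖X‖ = ‖Y‖ ∨ (‖X‖ ≤ s ∧ ‖Y‖ ≤ s) :=
  matIso_quadratic_locallyConstant_general s hs f hf1 hf hf0 X Y
end

section
/- Let B = {X ∈ ℝ³ : ‖X‖ < r} (r > 0) carry the quadratic response W(X,F) = f(‖X‖²) • (F Fᵀ − 1), where f : ℝ → ℝ is continuously differentiable, and let X₀ ∈ B be a point with f'(‖X₀‖²) ≠ 0. Then there exists an open neighbourhood U ⊆ ℝ of ‖X₀‖² such that for all X, Y ∈ B with ‖X‖² ∈ U and ‖Y‖² ∈ U, the points X and Y are materially isomorphic if and only if ‖X‖ = ‖Y‖. -/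
open Matrix

/-!
If `F` is a material isomorphism from `X` to `Y`, taking `G = 1` gives `f(‖X‖²) • F Fᵀ = f(‖X‖²) • 1`,
and then `G = 2 • 1` forces `f(‖X‖²) = f(‖Y‖²)`; conversely `F = 1` is a material isomorphism as soon
as these values agree. So material isomorphism is equality of `f` at the squared norms, and near
`‖X₀‖²` the function `f` is injective by the inverse function theorem.
-/

theorem exists_isOpen_injOn_of_deriv_ne_zero {𝕜 : Type*} [RCLike 𝕜] {f : 𝕜 → 𝕜} {a : 𝕜}
    (hf : ContDiffAt 𝕜 1 f a) (hd : deriv f a ≠ 0) :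
    ∃ U : Set 𝕜, IsOpen U ∧ a ∈ U ∧ Set.InjOn f U := by
  let e := ((hf.hasStrictDerivAt one_ne_zero).hasStrictFDerivAt_equiv hd).toOpenPartialHomeomorph f
  exact ⟨e.source, e.open_source, HasStrictFDerivAt.mem_toOpenPartialHomeomorph_source _, e.injOn⟩

theorem smul_one_mul_mul_transpose {n : Type*} [Fintype n] [DecidableEq n] (a : ℝ)
    (M : Matrix n n ℝ) : a • (1 : Matrix n n ℝ) * M * (a • (1 : Matrix n n ℝ) * M)ᵀ =
      a ^ 2 • (M * Mᵀ) := by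
  simp only [smul_mul, one_mul, transpose_smul, Matrix.mul_smul, smul_smul, sq]

theorem eq_of_forall_smul_mul_transpose_sub_one {n : Type*} [Fintype n] [DecidableEq n]
    [Nonempty n] {c d : ℝ} (F : Matrix n n ℝ)
    (h : ∀ G : GL n ℝ, c • ((G : Matrix n n ℝ) * F * ((G : Matrix n n ℝ) * F)ᵀ - 1) =
      d • ((G : Matrix n n ℝ) * (G : Matrix n n ℝ)ᵀ - 1)) :
    c = d := by
  have hF : c • (F * Fᵀ) = c • 1 := by
    simpa only [Units.val_one, one_mul, transpose_one, mul_one, sub_self, smul_zero, smul_sub,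
      sub_eq_zero] using h 1
  have h2 := h (GeneralLinearGroup.scalar n (Units.mk0 2 two_ne_zero))
  have hG : ((GeneralLinearGroup.scalar n (Units.mk0 (2 : ℝ) two_ne_zero) : GL n ℝ) : Matrix n n ℝ)
      = (2 : ℝ) • 1 := by
    simp [Matrix.smul_one_eq_diagonal]
  rw [hG, smul_one_mul_mul_transpose, ← mul_one ((2 : ℝ) • (1 : Matrix n n ℝ)),
    smul_one_mul_mul_transpose, smul_sub, smul_comm c, hF, smul_comm] at h2
  obtain ⟨i⟩ := ‹Nonempty n›
  have := congr_fun (congr_fun h2 i) i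
  simp only [Matrix.sub_apply, Matrix.smul_apply, one_apply_eq, smul_eq_mul, mul_one, transpose_one]
    at this
  linarith

theorem exists_isMatIso_Wq_iff {f : ℝ → ℝ} {X Y : EuclideanSpace ℝ (Fin 3)} :
    (∃ F : GL (Fin 3) ℝ, IsMatIso (Wq f) X Y F) ↔ f (‖X‖ ^ 2) = f (‖Y‖ ^ 2) := by
  constructor
  · rintro ⟨F, hF⟩
    exact eq_of_forall_smul_mul_transpose_sub_one (F : Matrix (Fin 3) (Fin 3) ℝ) fun G => by
      simpa only [IsMatIso, Wq, Units.val_mul] using hF G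
  · intro h
    exact ⟨1, fun G => by simp only [Wq, mul_one, h]⟩

theorem matIso_quadratic_local_general (r : ℝ) (f : ℝ → ℝ)
    (hf : ContDiff ℝ 1 f)
    (X₀ : EuclideanSpace ℝ (Fin 3))
    (hd : deriv f (‖X₀‖ ^ 2) ≠ 0) :
    ∃ U : Set ℝ, IsOpen U ∧ ‖X₀‖ ^ 2 ∈ U ∧
      ∀ X Y : EuclideanSpace ℝ (Fin 3), ‖X‖ < r → ‖Y‖ < r →
        ‖X‖ ^ 2 ∈ U → ‖Y‖ ^ 2 ∈ U →
          ((∃ F : GL (Fin 3) ℝ, IsMatIso (Wq f) X Y F) ↔ ‖X‖ = ‖Y‖) := by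
  obtain ⟨U, hU, hX₀U, hinj⟩ := exists_isOpen_injOn_of_deriv_ne_zero hf.contDiffAt hd
  refine ⟨U, hU, hX₀U, fun X Y _ _ hX hY => ?_⟩
  rw [exists_isMatIso_Wq_iff, hinj.eq_iff hX hY,
    pow_left_inj₀ (norm_nonneg X) (norm_nonneg Y) two_ne_zero]

/-- If `f` is continuously differentiable and `f'(‖X₀‖²) ≠ 0`, then on a
neighbourhood `U` of `‖X₀‖²`, points of the ball whose squared norms lie in `U`
are materially isomorphic iff they have the same norm. -/
theorem matIso_quadratic_local (r : ℝ) (hr : 0 < r) (f : ℝ → ℝ)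
    (hf : ContDiff ℝ 1 f)
    (X₀ : EuclideanSpace ℝ (Fin 3)) (hX₀ : ‖X₀‖ < r)
    (hd : deriv f (‖X₀‖ ^ 2) ≠ 0) :
    ∃ U : Set ℝ, IsOpen U ∧ ‖X₀‖ ^ 2 ∈ U ∧
      ∀ X Y : EuclideanSpace ℝ (Fin 3), ‖X‖ < r → ‖Y‖ < r →
        ‖X‖ ^ 2 ∈ U → ‖Y‖ ^ 2 ∈ U →
          ((∃ F : GL (Fin 3) ℝ, IsMatIso (Wq f) X Y F) ↔ ‖X‖ = ‖Y‖) :=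
  matIso_quadratic_local_general r f hf X₀ hd
end
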